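/- arXiv:math/0304114 — 4 statements merged into one kernel-verified Lean document; each statement's English description precedes it below -/
import Mathlib

section
/- Let 𝔤 be a real Lie algebra equipped with an ad-invariant inner product. Suppose X, A, W ∈ 𝔤 satisfy: ⁅X, A⁆ ≠ 0; W ≠ 0; ⁅X, W⁆ = 0; and, if ⁅W, ⁅X, A⁆⁆ = 0 then W is a real scalar multiple of ⁅X, A⁆. Then ⁅X, ⁅A, W⁆⁆ ≠ 0. -/
/-!
By the Jacobi identity, `⁅X, W⁆ = 0` gives `⁅X, ⁅A, W⁆⁆ = -⁅W, ⁅X, A⁆⁆`. If this vanished, the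
hypothesis would make `W` a nonzero multiple of `⁅X, A⁆`, hence `⁅X, ⁅X, A⁆⁆ = 0`. But then
ad-invariance gives `‖⁅X, A⁆‖² = -⟪A, ⁅X, ⁅X, A⁆⁆⟫ = 0`, contradicting `⁅X, A⁆ ≠ 0`.
-/

open scoped RealInnerProductSpace

lemma lie_lie_eq_neg_lie_lie_of_lie_eq_zero {L : Type*} [LieRing L] {X A W : L}
    (h : ⁅X, W⁆ = 0) : ⁅X, ⁅A, W⁆⁆ = -⁅W, ⁅X, A⁆⁆ := by
  rw [leibniz_lie, h, lie_zero, add_zero, ← lie_skew]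

section AdInvariantInner

variable {L : Type*} [LieRing L] [NormedAddCommGroup L] [InnerProductSpace ℝ L]

/- The additive structures of `LieRing L` and `NormedAddCommGroup L` are a priori unrelated, and
`0 : L` below is the zero of the Lie ring; ad-invariance forces it to be the zero of the norm. -/
lemma norm_zero_of_inner_lie (had : ∀ a b c : L, ⟪⁅a, b⁆, c⟫ = -⟪b, ⁅a, c⁆⟫) :
    ‖(0 : L)‖ = 0 := by
  have h := had 0 0 0
  rw [zero_lie] at h
  rw [← sq_eq_zero_iff, ← real_inner_self_eq_norm_sq]
  linarith

lemma lie_eq_zero_of_lie_lie_self_eq_zero (had : ∀ a b c : L, ⟪⁅a, b⁆, c⟫ = -⟪b, ⁅a, c⁆⟫)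
    {X A : L} (h : ⁅X, ⁅X, A⁆⁆ = 0) : ⁅X, A⁆ = 0 := by
  have hzero := norm_eq_zero.mp (norm_zero_of_inner_lie had)
  rw [hzero, ← inner_self_eq_zero (𝕜 := ℝ), had, h, hzero, inner_zero_right, neg_zero]

end AdInvariantInner

/-- Core argument of part (3) of Theorem 2.2: in a real Lie algebra with an
ad-invariant inner product, if ⁅X,A⁆ ≠ 0, W ≠ 0, ⁅X,W⁆ = 0, and whenever
⁅W,⁅X,A⁆⁆ = 0 the vector W is a real multiple of ⁅X,A⁆, then ⁅X,⁅A,W⁆⁆ ≠ 0. -/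
theorem stmt2 (L : Type*) [LieRing L] [LieAlgebra ℝ L]
    [NormedAddCommGroup L] [InnerProductSpace ℝ L]
    (had : ∀ a b c : L, ⟪⁅a, b⁆, c⟫ = -⟪b, ⁅a, c⁆⟫)
    (X A W : L)
    (h1 : ⁅X, A⁆ ≠ 0) (h2 : W ≠ 0) (h3 : ⁅X, W⁆ = 0)
    (h4 : ⁅W, ⁅X, A⁆⁆ = 0 → ∃ lam : ℝ, W = lam • ⁅X, A⁆) :
    ⁅X, ⁅A, W⁆⁆ ≠ 0 := by
  intro h0
  have hW : ⁅W, ⁅X, A⁆⁆ = 0 := by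
    rwa [lie_lie_eq_neg_lie_lie_of_lie_eq_zero h3, neg_eq_zero] at h0
  obtain ⟨lam, rfl⟩ := h4 hW
  have hlam : lam ≠ 0 := by
    rintro rfl
    exact h2 (zero_smul ℝ _)
  have hXXA : ⁅X, ⁅X, A⁆⁆ = 0 := by
    rwa [lie_smul, smul_eq_zero, or_iff_right hlam] at h3
  exact h1 (lie_eq_zero_of_lie_lie_self_eq_zero had hXXA)
end

section
/- Let g₁, g₂ be unit quaternions (‖g₁‖ = ‖g₂‖ = 1) and let a be a nonzero quaternion with re(a) = 0 and imI(a) = 0. If the conjugates g₁·a·g₁⁻¹ and g₂·a·g₂⁻¹ commute, i.e. (g₁ a g₁⁻¹)(g₂ a g₂⁻¹) = (g₂ a g₂⁻¹)(g₁ a g₁⁻¹), then the quaternion q = g₁⁻¹·g₂ satisfies re(q) = 0 or imI(q) = 0. -/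
/-!
Put `q = g₁⁻¹ g₂`. Conjugating the hypothesis by `g₁⁻¹` shows that `A = q a q⁻¹` commutes
with `a`. Since `a` is pure, `a² = -‖a‖²` is central, so `A² = q a² q⁻¹ = a²`; as `A` and `a`
commute, `(A - a)(A + a) = 0` and hence `A = ±a`. If `q a = a q`, the `j`- and `k`-components
of this equation give `q.imI • a = 0`; if `q a = -a q`, its imaginary part gives `q.re • a = 0`.
-/

open scoped Quaternion

theorem Commute.conj_iff₀ {G₀ : Type*} [GroupWithZero G₀] {g a b : G₀} (hg : g ≠ 0) :
    Commute (g * a * g⁻¹) (g * b * g⁻¹) ↔ Commute a b := by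
  have conj_mul (x y : G₀) : g * x * g⁻¹ * (g * y * g⁻¹) = g * (x * y) * g⁻¹ := by
    simp only [mul_assoc, inv_mul_cancel_left₀ hg]
  simp only [Commute, SemiconjBy, conj_mul, mul_left_inj' (inv_ne_zero hg),
    mul_right_inj' hg]

namespace Quaternion

variable {R : Type*} [Field R] [LinearOrder R] [IsStrictOrderedRing R] {a q : ℍ[R]}

theorem sq_conj_of_re_eq_zero (ha : a.re = 0) (hq : q ≠ 0) : (q * a * q⁻¹) ^ 2 = a ^ 2 := by
  have hsq : a ^ 2 = -normSq a := sq_eq_neg_normSq.mpr ha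
  calc (q * a * q⁻¹) ^ 2 = q * a ^ 2 * q⁻¹ := by
        simp only [sq, mul_assoc, inv_mul_cancel_left₀ hq]
    _ = a ^ 2 := by
        rw [hsq, ← coe_neg, ← coe_commutes, mul_inv_cancel_right₀ hq]

theorem imI_eq_zero_of_commute (ha : a ≠ 0) (hre : a.re = 0) (himI : a.imI = 0)
    (h : Commute q a) : q.imI = 0 := by
  have hJ := congrArg (·.imJ) h.eq
  have hK := congrArg (·.imK) h.eq
  simp only [imJ_mul, imK_mul, hre, himI] at hJ hK
  by_contra hq
  refine ha (QuaternionAlgebra.ext hre himI ?_ ?_)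
  · exact (mul_eq_zero.mp (by linarith : q.imI * a.imJ = 0)).resolve_left hq
  · exact (mul_eq_zero.mp (by linarith : q.imI * a.imK = 0)).resolve_left hq

theorem re_eq_zero_of_anticommute (ha : a ≠ 0) (hre : a.re = 0) (h : q * a = -(a * q)) :
    q.re = 0 := by
  have hI := congrArg (·.imI) h
  have hJ := congrArg (·.imJ) h
  have hK := congrArg (·.imK) h
  simp only [imI_mul, imJ_mul, imK_mul, imI_neg, imJ_neg, imK_neg, hre] at hI hJ hK
  by_contra hq
  refine ha (QuaternionAlgebra.ext hre ?_ ?_ ?_)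
  · exact (mul_eq_zero.mp (by linarith : q.re * a.imI = 0)).resolve_left hq
  · exact (mul_eq_zero.mp (by linarith : q.re * a.imJ = 0)).resolve_left hq
  · exact (mul_eq_zero.mp (by linarith : q.re * a.imK = 0)).resolve_left hq

end Quaternion

theorem stmt7_general (g₁ g₂ a : ℍ[ℝ])
    (ha : a ≠ 0) (hre : a.re = 0) (himI : a.imI = 0)
    (hcomm : (g₁ * a * g₁⁻¹) * (g₂ * a * g₂⁻¹) = (g₂ * a * g₂⁻¹) * (g₁ * a * g₁⁻¹)) :
    (g₁⁻¹ * g₂).re = 0 ∨ (g₁⁻¹ * g₂).imI = 0 := by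
  set q := g₁⁻¹ * g₂ with hq_def
  rcases eq_or_ne q 0 with hq | hq
  · exact Or.inl (by rw [hq]; rfl)
  have hg₁ : g₁ ≠ 0 := fun h ↦ hq (by rw [hq_def, h, inv_zero, zero_mul])
  have hconj : g₂ * a * g₂⁻¹ = g₁ * (q * a * q⁻¹) * g₁⁻¹ := by
    simp only [hq_def, mul_inv_rev, inv_inv, mul_assoc, mul_inv_cancel_left₀ hg₁,
      mul_inv_cancel₀ hg₁, mul_one]
  have hcomm_q : Commute (q * a * q⁻¹) a :=
    ((Commute.conj_iff₀ hg₁).mp (hconj ▸ hcomm)).symm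
  rcases hcomm_q.sq_eq_sq_iff_eq_or_eq_neg.mp (Quaternion.sq_conj_of_re_eq_zero hre hq)
    with h | h
  · exact Or.inr <|
      Quaternion.imI_eq_zero_of_commute ha hre himI ((mul_inv_eq_iff_eq_mul₀ hq).mp h)
  · refine Or.inl (Quaternion.re_eq_zero_of_anticommute ha hre ?_)
    rw [(mul_inv_eq_iff_eq_mul₀ hq).mp h, neg_mul]

/-- Key computation of Proposition 5.1: if g₁, g₂ are unit quaternions, a is a
nonzero pure quaternion orthogonal to i, and the conjugates g₁ a g₁⁻¹ and
g₂ a g₂⁻¹ commute, then q = g₁⁻¹ g₂ is orthogonal to 1 or orthogonal to i. -/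
theorem stmt7 (g₁ g₂ a : ℍ[ℝ]) (hg₁ : ‖g₁‖ = 1) (hg₂ : ‖g₂‖ = 1)
    (ha : a ≠ 0) (hre : a.re = 0) (himI : a.imI = 0)
    (hcomm : (g₁ * a * g₁⁻¹) * (g₂ * a * g₂⁻¹) = (g₂ * a * g₂⁻¹) * (g₁ * a * g₁⁻¹)) :
    (g₁⁻¹ * g₂).re = 0 ∨ (g₁⁻¹ * g₂).imI = 0 :=
  stmt7_general g₁ g₂ a ha hre himI hcomm
end

section
/- Let n ≥ 2, let k, l be integers with k ≠ 0, let t ∈ ℝ, and let z₂, …, z_n ∈ ℂ. Define (n+1)×(n+1) complex matrices X and A (indices 0,…,n) by: X₀₀ = -t·l·i, X₁₁ = t·k·i, X₁ⱼ = zⱼ and Xⱼ₁ = -conj(zⱼ) for 2 ≤ j ≤ n, and all other entries of X zero; A₀₁ = A₀₂ = 1, A₁₀ = A₂₀ = -1, and all other entries of A zero. If X·A = A·X, then t = 0 and zⱼ = 0 for all j; that is, X = 0. -/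
/-- Computation in Proposition 6.4: with X a general element of 𝔪 and A the
specific element of 𝔭 with A₀₁ = A₀₂ = 1, A₁₀ = A₂₀ = -1, if X commutes with A
then X = 0, i.e. t = 0 and all zⱼ = 0. -/
theorem stmt8 (n : ℕ) (hn : 2 ≤ n) (k l : ℤ) (hk : k ≠ 0) (t : ℝ)
    (z : Fin (n + 1) → ℂ)
    (X A : Matrix (Fin (n + 1)) (Fin (n + 1)) ℂ)
    (hX : ∀ i j : Fin (n + 1), X i j =
      if (i : ℕ) = 0 ∧ (j : ℕ) = 0 then -((t : ℂ) * (l : ℂ)) * Complex.I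
      else if (i : ℕ) = 1 ∧ (j : ℕ) = 1 then ((t : ℂ) * (k : ℂ)) * Complex.I
      else if (i : ℕ) = 1 ∧ 2 ≤ (j : ℕ) then z j
      else if (j : ℕ) = 1 ∧ 2 ≤ (i : ℕ) then -(starRingEnd ℂ) (z i)
      else 0)
    (hA : ∀ i j : Fin (n + 1), A i j =
      if (i : ℕ) = 0 ∧ ((j : ℕ) = 1 ∨ (j : ℕ) = 2) then 1
      else if ((i : ℕ) = 1 ∨ (i : ℕ) = 2) ∧ (j : ℕ) = 0 then -1
      else 0)
    (hcomm : X * A = A * X) :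
    t = 0 ∧ (∀ j : Fin (n + 1), 2 ≤ (j : ℕ) → z j = 0) ∧ X = 0 := by
  have h0 : 0 < n + 1 := by omega
  have h1 : 1 < n + 1 := by omega
  have h2 : 2 < n + 1 := by omega
  set i0 : Fin (n+1) := ⟨0, h0⟩ with hi0
  set i1 : Fin (n+1) := ⟨1, h1⟩ with hi1
  set i2 : Fin (n+1) := ⟨2, h2⟩ with hi2
  -- row 0 of (A*X)
  have hAX : ∀ j, (A * X) i0 j = X i1 j + X i2 j := by
    intro j
    rw [Matrix.mul_apply]
    have key : ∀ m : Fin (n+1), A i0 m * X m j =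
        (if m = i1 then X i1 j else 0) + (if m = i2 then X i2 j else 0) := by
      intro m
      rw [hA]
      by_cases e1 : m = i1
      · subst e1; simp [i0, i1, i2, Fin.ext_iff]
      · by_cases e2 : m = i2
        · subst e2; simp [i0, i1, i2, Fin.ext_iff]
        · have m1 : (m : ℕ) ≠ 1 := by
            intro h; exact e1 (Fin.ext h)
          have m2 : (m : ℕ) ≠ 2 := by
            intro h; exact e2 (Fin.ext h)
          simp [i0, e1, e2, m1, m2]
    rw [Finset.sum_congr rfl (fun m _ => key m), Finset.sum_add_distrib,
      Finset.sum_ite_eq' , Finset.sum_ite_eq']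
    simp
  -- row 0 of (X*A)
  have hXA : ∀ j, (X * A) i0 j = (-((t : ℂ) * (l : ℂ)) * Complex.I) * A i0 j := by
    intro j
    rw [Matrix.mul_apply]
    have key : ∀ m : Fin (n+1), X i0 m * A m j =
        (if m = i0 then (-((t : ℂ) * (l : ℂ)) * Complex.I) * A i0 j else 0) := by
      intro m
      by_cases e0 : m = i0
      · subst e0; rw [hX]; simp [i0]
      · have m0 : (m : ℕ) ≠ 0 := fun h => e0 (Fin.ext h)
        rw [if_neg e0, hX]
        simp [i0, m0]
    rw [Finset.sum_congr rfl (fun m _ => key m), Finset.sum_ite_eq']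
    simp
  -- entry values
  have hAi1 : A i0 i1 = 1 := by rw [hA]; simp [i0, i1]
  have hAi2 : A i0 i2 = 1 := by rw [hA]; simp [i0, i2]
  have hX11 : X i1 i1 = ((t : ℂ) * (k : ℂ)) * Complex.I := by rw [hX]; simp [i1]
  have hX21 : X i2 i1 = -(starRingEnd ℂ) (z i2) := by rw [hX]; simp [i1, i2]
  have hX12 : X i1 i2 = z i2 := by rw [hX]; simp [i1, i2]
  have hX22 : X i2 i2 = 0 := by rw [hX]; simp [i2]
  -- equations
  have eq1 : -((t : ℂ) * (l : ℂ)) * Complex.I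
      = ((t : ℂ) * (k : ℂ)) * Complex.I + -(starRingEnd ℂ) (z i2) := by
    have := congrFun (congrFun hcomm i0) i1
    rw [hXA, hAX, hAi1, hX11, hX21, mul_one] at this
    exact this
  have eq2 : -((t : ℂ) * (l : ℂ)) * Complex.I = z i2 := by
    have := congrFun (congrFun hcomm i0) i2
    rw [hXA, hAX, hAi2, hX12, hX22, mul_one, add_zero] at this
    exact this
  have hconj : (starRingEnd ℂ) (z i2) = ((t : ℂ) * (l : ℂ)) * Complex.I := by
    rw [← eq2]
    simp [map_mul, Complex.conj_I, Complex.conj_ofReal]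
  rw [hconj] at eq1
  have htk : ((t : ℂ) * (k : ℂ)) * Complex.I = 0 := by
    have : ((t : ℂ) * (k : ℂ)) * Complex.I = -((t : ℂ) * (l : ℂ)) * Complex.I + ((t : ℂ) * (l : ℂ)) * Complex.I := by
      rw [eq1]; ring
    rw [this]; ring
  have ht : t = 0 := by
    have hI : Complex.I ≠ 0 := Complex.I_ne_zero
    have := mul_eq_zero.mp htk
    rcases this with h | h
    · rcases mul_eq_zero.mp h with h' | h'
      · exact_mod_cast h'
      · exact absurd (by exact_mod_cast h' : (k:ℂ) = 0) (by exact_mod_cast hk)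
    · exact absurd h hI
  subst ht
  have hz : ∀ j : Fin (n + 1), 2 ≤ (j : ℕ) → z j = 0 := by
    intro j hj
    by_cases e2 : j = i2
    · subst e2; rw [← eq2]; simp
    · have hj3 : (j : ℕ) ≠ 2 := fun h => e2 (Fin.ext h)
      have hj1 : (j : ℕ) ≠ 1 := by omega
      have := congrFun (congrFun hcomm i0) j
      rw [hXA, hAX] at this
      have hA0j : A i0 j = 0 := by rw [hA]; simp [i0, hj1, hj3]
      have hX1j : X i1 j = z j := by rw [hX]; simp [i1, hj, hj1]
      have hX2j : X i2 j = 0 := by rw [hX]; simp [i2, hj1, hj3]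
      rw [hA0j, hX1j, hX2j, mul_zero, add_zero] at this
      exact this.symm
  refine ⟨rfl, hz, ?_⟩
  ext i j
  rw [hX]
  by_cases c1 : (i : ℕ) = 1 ∧ 2 ≤ (j : ℕ)
  · have := hz j c1.2
    simp [c1, this]
  · by_cases c2 : (j : ℕ) = 1 ∧ 2 ≤ (i : ℕ)
    · have := hz i c2.2
      simp [c1, c2, this]
    · simp [c1, c2]
end

section
/- Let n ≥ 2, let Y be a quaternion with re(Y) = 0, and let z₂, …, z_n ∈ ℍ. Define (n+1)×(n+1) quaternionic matrices X and A (indices 0,…,n) by: X₁₁ = Y, X₁ⱼ = zⱼ and Xⱼ₁ = -conj(zⱼ) for 2 ≤ j ≤ n, and all other entries of X zero; A₀₁ = 1, A₁₀ = -1, and all other entries of A zero. If X·A = A·X, then Y = 0 and zⱼ = 0 for all j; that is, X = 0. -/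
open scoped Quaternion

/-- Computation in Proposition 6.5: with X a general element of 𝔪 and A the
specific element of 𝔭 with A₀₁ = 1, A₁₀ = -1, if X commutes with A then X = 0,
i.e. Y = 0 and all zⱼ = 0. -/
theorem stmt9 (n : ℕ) (hn : 2 ≤ n) (Y : ℍ[ℝ]) (hY : Y.re = 0)
    (z : Fin (n + 1) → ℍ[ℝ])
    (X A : Matrix (Fin (n + 1)) (Fin (n + 1)) ℍ[ℝ])
    (hX : ∀ i j : Fin (n + 1), X i j =
      if (i : ℕ) = 1 ∧ (j : ℕ) = 1 then Y
      else if (i : ℕ) = 1 ∧ 2 ≤ (j : ℕ) then z j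
      else if (j : ℕ) = 1 ∧ 2 ≤ (i : ℕ) then -star (z i)
      else 0)
    (hA : ∀ i j : Fin (n + 1), A i j =
      if (i : ℕ) = 0 ∧ (j : ℕ) = 1 then 1
      else if (i : ℕ) = 1 ∧ (j : ℕ) = 0 then -1
      else 0)
    (hcomm : X * A = A * X) :
    Y = 0 ∧ (∀ j : Fin (n + 1), 2 ≤ (j : ℕ) → z j = 0) ∧ X = 0 := by
  have hn1 : (1 : ℕ) < n + 1 := by omega
  have hn0 : (0 : ℕ) < n + 1 := by omega
  have hent : ∀ i j, (X * A) i j = (A * X) i j := fun i j => by rw [hcomm]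
  have hY0 : Y = 0 := by
    have h := hent ⟨1, hn1⟩ ⟨0, hn0⟩
    rw [Matrix.mul_apply, Matrix.mul_apply,
      Finset.sum_eq_single (⟨1, hn1⟩ : Fin (n + 1)),
      Finset.sum_eq_single (⟨0, hn0⟩ : Fin (n + 1))] at h
    · simpa [hX, hA] using h
    · intro k _ hk
      have : (k : ℕ) ≠ 0 := fun h' => hk (Fin.ext h')
      simp [hX, hA, this]
    · simp
    · intro k _ hk
      have : (k : ℕ) ≠ 1 := fun h' => hk (Fin.ext h')
      simp [hX, hA, this]
    · simp
  have hz : ∀ j : Fin (n + 1), 2 ≤ (j : ℕ) → z j = 0 := by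
    intro j hj
    have h := hent j ⟨0, hn0⟩
    rw [Matrix.mul_apply, Matrix.mul_apply,
      Finset.sum_eq_single (⟨1, hn1⟩ : Fin (n + 1)),
      Finset.sum_eq_zero] at h
    · have hj1 : (j : ℕ) ≠ 1 := by omega
      have hj0 : (j : ℕ) ≠ 0 := by omega
      simp only [hX, hA] at h
      simp [hj1, hj, hj0] at h
      simpa [star_eq_zero] using h
    · intro k _
      have hj1 : (j : ℕ) ≠ 1 := by omega
      have hj0 : (j : ℕ) ≠ 0 := by omega
      simp [hA, hj1, hj0]
    · intro k _ hk
      have : (k : ℕ) ≠ 1 := fun h' => hk (Fin.ext h')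
      simp [hX, hA, this]
    · simp
  refine ⟨hY0, hz, ?_⟩
  apply Matrix.ext
  intro i j
  rw [hX, Matrix.zero_apply]
  split_ifs with h1 h2 h3
  · exact hY0
  · exact hz j h2.2
  · simp [hz i h3.2]
  · rfl
end
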